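/- arXiv:1810.08057 — 2 statements merged into one kernel-verified Lean document; each statement's English description precedes it below -/
import Mathlib

section
/- Let S ⊆ ℝ² be a compact set with path-connected boundary, S = closure(interior(S)), that is θ-biconvex. For any finite set 𝒳ₙ ⊆ S, the Hausdorff distance satisfies d_H(𝔹_θ(𝒳ₙ), 𝔹_θ(S)) ≤ 2√2 · d_H(S, 𝒳ₙ). -/
/-! Under these hypotheses `𝔹_θ(S) = S`, so the bound holds with constant `1`.
`S` is connected: each of its points is joined inside `S`, along a line section in direction
`bvec2 θ`, to the connected frontier. For `x ∉ S`, convexity of the sections puts the points of `S`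
on each axis through `x` on a single side of `x`; orienting the axes accordingly, the larger of the
two coordinates of `z - x` never vanishes on `S`, so by connectedness it has a constant sign, and
one closed quadrant at `x` misses `S`. By compactness a slightly shifted open quadrant cone still
misses `S` and contains `x`. Finally `X ⊆ 𝔹_θ(X) ⊆ S` gives `d_H(𝔹_θ(X), S) ≤ d_H(S, X)`. -/

noncomputable section

open Set Metric MeasureTheory Filter Real
open scoped RealInnerProductSpace Topology symmDiff

/-- The Euclidean plane. -/
abbrev E2 : Type := EuclideanSpace ℝ (Fin 2)

/-- The line through `p` in direction `v`. -/
def lineThru (p v : E2) : Set E2 := {x | ∃ t : ℝ, x = p + t • v}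

/-- `S` is biconvex with respect to the directions `b₁, b₂`: every section of `S`
along a line in direction `b₁` or `b₂` is convex. -/
def Biconvex (b₁ b₂ : E2) (S : Set E2) : Prop :=
  ∀ p : E2, Convex ℝ (lineThru p b₁ ∩ S) ∧ Convex ℝ (lineThru p b₂ ∩ S)

/-- Open quadrant-cone with vertex `y` and sides in the directions `u, v`
(an open cone of opening angle `π/2` when `u ⊥ v`). -/
def Quadrant (y u v : E2) : Set E2 :=
  {x | ∃ s t : ℝ, 0 < s ∧ 0 < t ∧ x = y + s • u + t • v}

/-- The four open quadrant-cones at `y` with sides parallel to `b₁, b₂`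
(axes `ξ, Rξ, R²ξ, R³ξ` with `ξ = (b₁+b₂)/‖b₁+b₂‖`). -/
def QuadrantCones (b₁ b₂ y : E2) : Set (Set E2) :=
  {Quadrant y b₁ b₂, Quadrant y (-b₁) b₂, Quadrant y b₁ (-b₂), Quadrant y (-b₁) (-b₂)}

/-- First canonical axis rotated counter-clockwise by `θ`. -/
def bvec1 (θ : ℝ) : E2 := (WithLp.equiv 2 (Fin 2 → ℝ)).symm ![Real.cos θ, Real.sin θ]

/-- Second canonical axis rotated counter-clockwise by `θ`. -/
def bvec2 (θ : ℝ) : E2 := (WithLp.equiv 2 (Fin 2 → ℝ)).symm ![-Real.sin θ, Real.cos θ]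

/-- `S` is `θ`-biconvex. -/
def ThetaBiconvex (θ : ℝ) (S : Set E2) : Prop := Biconvex (bvec1 θ) (bvec2 θ) S

/-- The `θ`-biconvex hull: intersection of the complements of all open quadrant-cones
(with sides parallel to the `θ`-rotated axes) that do not meet `A`. -/
def BHull (θ : ℝ) (A : Set E2) : Set E2 :=
  ⋂₀ {T | ∃ y C, C ∈ QuadrantCones (bvec1 θ) (bvec2 θ) y ∧ C ∩ A = ∅ ∧ T = Cᶜ}

/-- Erosion `A ⊖ B(0,r)`. -/
def Erosion (A : Set E2) (r : ℝ) : Set E2 :=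
  ⋃ x ∈ {x : E2 | closedBall x r ⊆ A}, closedBall x r

open Module

lemma Set.OrdConnected.subset_Ioi_or_subset_Iio {α : Type*} [LinearOrder α] {I : Set α} {a : α}
    (hI : I.OrdConnected) (ha : a ∉ I) : I ⊆ Ioi a ∨ I ⊆ Iio a := by
  by_contra! h
  simp only [not_subset, mem_Ioi, mem_Iio, not_lt] at h
  obtain ⟨⟨p, hp, hpa⟩, ⟨q, hq, hqa⟩⟩ := h
  exact ha (hI.out hp hq ⟨hpa, hqa⟩)

section Lines

variable {S : Set E2} {p c : E2}

lemma ordConnected_setOf_add_smul_mem (h : Convex ℝ (lineThru p c ∩ S)) :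
    {t : ℝ | p + t • c ∈ S}.OrdConnected := by
  have hline : {t : ℝ | p + t • c ∈ S} = AffineMap.lineMap p (p + c) ⁻¹' (lineThru p c ∩ S) := by
    ext t
    simp only [mem_ofPred_eq, mem_preimage, AffineMap.lineMap_apply_module', add_sub_cancel_left,
      add_comm _ p]
    exact ⟨fun ht => ⟨⟨t, rfl⟩, ht⟩, And.right⟩
  rw [← convex_iff_ordConnected, hline]
  exact h.affine_preimage _

lemma exists_add_smul_mem_frontier (hS : IsCompact S) (hc : c ≠ 0) (hp : p ∈ S) :
    ∃ t : ℝ, p + t • c ∈ frontier S := by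
  set f : ℝ → E2 := fun t => p + t • c
  have hf : Topology.IsClosedEmbedding f :=
    (Homeomorph.addLeft p).isClosedEmbedding.comp (isClosedEmbedding_smul_left hc)
  have hne : f ⁻¹' S ≠ univ := fun h =>
    noncompact_univ ℝ (h ▸ hf.isCompact_preimage hS)
  obtain ⟨t, ht⟩ := nonempty_frontier_iff.mpr ⟨⟨0, by simpa [f] using hp⟩, hne⟩
  exact ⟨t, hf.continuous.frontier_preimage_subset S ht⟩

lemma IsCompact.isPreconnected_of_convex_lineThru_inter (hS : IsCompact S) (hc : c ≠ 0)
    (hconv : ∀ p, Convex ℝ (lineThru p c ∩ S)) (hfr : IsPreconnected (frontier S)) :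
    IsPreconnected S := by
  rcases S.eq_empty_or_nonempty with rfl | ⟨s, hs⟩
  · exact isPreconnected_empty
  have hfrS : frontier S ⊆ S := hS.isClosed.frontier_subset
  obtain ⟨t₀, ht₀⟩ := exists_add_smul_mem_frontier hS hc hs
  refine isPreconnected_of_forall (s + t₀ • c) fun y hy => ?_
  obtain ⟨t, ht⟩ := exists_add_smul_mem_frontier hS hc hy
  have hseg : segment ℝ y (y + t • c) ⊆ S := fun z hz =>
    ((hconv y).segment_subset ⟨⟨0, by simp⟩, hy⟩ ⟨⟨t, rfl⟩, hfrS ht⟩ hz).2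
  refine ⟨segment ℝ y (y + t • c) ∪ frontier S, union_subset hseg hfrS, Or.inr ht₀,
    Or.inl (left_mem_segment ℝ _ _), ?_⟩
  exact (convex_segment _ _).isPreconnected.union _ (right_mem_segment ℝ _ _) ht hfr

lemma exists_unit_forall_add_smul_mem_pos (h : Convex ℝ (lineThru p c ∩ S)) (hp : p ∉ S) :
    ∃ w : ℝˣ, (w = 1 ∨ w = -1) ∧ ∀ t : ℝ, p + t • (w : ℝ) • c ∈ S → 0 < t := by
  rcases (ordConnected_setOf_add_smul_mem h).subset_Ioi_or_subset_Iio (a := 0) (by simpa) with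
    hpos | hneg
  · exact ⟨1, Or.inl rfl, fun t ht => hpos (by simpa using ht)⟩
  · refine ⟨-1, Or.inr rfl, fun t ht => neg_neg_iff_pos.mp (hneg ?_)⟩
    simpa [smul_smul] using ht

end Lines

section Coordinates

variable {S : Set E2} {x : E2}

lemma Module.Basis.eq_repr_zero_smul_add_repr_one_smul (b : Basis (Fin 2) ℝ E2) (v : E2) :
    v = b.repr v 0 • b 0 + b.repr v 1 • b 1 := by
  have h := b.sum_repr v
  rw [Fin.sum_univ_two] at h
  exact h.symm

lemma mem_quadrant_iff (b : Basis (Fin 2) ℝ E2) {y z : E2} :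
    z ∈ Quadrant y (b 0) (b 1) ↔ 0 < b.repr (z - y) 0 ∧ 0 < b.repr (z - y) 1 := by
  constructor
  · rintro ⟨s, t, hs, ht, rfl⟩
    simpa [add_sub_cancel_left] using And.intro hs ht
  · rintro ⟨hs, ht⟩
    refine ⟨_, _, hs, ht, ?_⟩
    rw [add_assoc, ← b.eq_repr_zero_smul_add_repr_one_smul, add_sub_cancel]

lemma continuous_basis_repr_apply {ι : Type*} (b : Basis ι ℝ E2) (i : ι) :
    Continuous fun z => b.repr z i :=
  (b.coord i).continuous_of_finiteDimensional

lemma exists_quadrant_disjoint (b : Basis (Fin 2) ℝ E2) (hS : IsCompact S)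
    (h : ∀ z ∈ S, b.repr (z - x) 0 < 0 ∨ b.repr (z - x) 1 < 0) :
    ∃ y, x ∈ Quadrant y (b 0) (b 1) ∧ Quadrant y (b 0) (b 1) ∩ S = ∅ := by
  set m : E2 → ℝ := fun z => -min (b.repr (z - x) 0) (b.repr (z - x) 1)
  have hm : Continuous m := by
    have hcoord := fun i => (continuous_basis_repr_apply b i).comp (continuous_sub_right x)
    exact ((hcoord 0).min (hcoord 1)).neg
  obtain ⟨δ, hδ, hδm⟩ := hS.exists_forall_le' hm.continuousOn (a := 0) fun z hz => by
    simpa [m] using h z hz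
  set y := x - (δ / 2) • (b 0 + b 1)
  have hxy : ∀ i, b.repr (x - y) i = δ / 2 := fun i => by fin_cases i <;> simp [y]
  have hzx : ∀ z i, b.repr (z - x) i = b.repr (z - y) i - δ / 2 := fun z i => by
    rw [← hxy i, ← Finsupp.sub_apply, ← map_sub, sub_sub_sub_cancel_right]
  refine ⟨y, (mem_quadrant_iff b).mpr ⟨?_, ?_⟩, eq_empty_of_forall_notMem fun z ⟨hzQ, hzS⟩ => ?_⟩
  · linarith [hxy 0]
  · linarith [hxy 1]
  rw [mem_quadrant_iff] at hzQ
  have hmz := hδm z hzS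
  simp only [m, hzx] at hmz
  rcases min_le_iff.mp (le_neg.mp hmz) with h0 | h1 <;> linarith [hzQ.1, hzQ.2]

end Coordinates

section Quadrants

variable {S : Set E2} {x : E2}

lemma exists_quadrant_disjoint_of_isPreconnected (b : Basis (Fin 2) ℝ E2) (hS : IsCompact S)
    (hpre : IsPreconnected S)
    (h₀ : ∀ z ∈ S, b.repr (z - x) 0 = 0 → 0 < b.repr (z - x) 1)
    (h₁ : ∀ z ∈ S, b.repr (z - x) 1 = 0 → 0 < b.repr (z - x) 0) :
    (∃ y, x ∈ Quadrant y (b 0) (b 1) ∧ Quadrant y (b 0) (b 1) ∩ S = ∅) ∨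
      (∃ y, x ∈ Quadrant y (-b 0) (-b 1) ∧ Quadrant y (-b 0) (-b 1) ∩ S = ∅) := by
  set m : E2 → ℝ := fun z => max (b.repr (z - x) 0) (b.repr (z - x) 1)
  have hm : Continuous m := by
    have hcoord := fun i => (continuous_basis_repr_apply b i).comp (continuous_sub_right x)
    exact (hcoord 0).max (hcoord 1)
  have hm0 : (0 : ℝ) ∉ m '' S := by
    rintro ⟨z, hz, hmz⟩
    rcases max_eq_iff.mp hmz with ⟨h, hle⟩ | ⟨h, hle⟩
    · linarith [h₀ z hz h]
    · linarith [h₁ z hz h]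
  rcases (hpre.image m hm.continuousOn).ordConnected.subset_Ioi_or_subset_Iio hm0 with hpos | hneg
  · right
    have hneg_b := exists_quadrant_disjoint (b.map (LinearEquiv.neg ℝ)) hS fun z hz => by
      have hmz := hpos (mem_image_of_mem m hz)
      simp only [mem_Ioi, lt_max_iff, m] at hmz
      simpa using hmz
    simpa using hneg_b
  · left
    exact exists_quadrant_disjoint b hS fun z hz =>
      Or.inl (lt_of_le_of_lt (le_max_left _ _) (hneg (mem_image_of_mem m hz)))

lemma Module.Basis.exists_forall_add_smul_mem_pos {ι : Type*} (b : Basis ι ℝ E2)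
    (hconv : ∀ i, Convex ℝ (lineThru x (b i) ∩ S)) (hx : x ∉ S) :
    ∃ b' : Basis ι ℝ E2, (∀ i, b' i = b i ∨ b' i = -b i) ∧
      ∀ i, ∀ t : ℝ, x + t • b' i ∈ S → 0 < t := by
  choose w hw hpos using fun i => exists_unit_forall_add_smul_mem_pos (hconv i) hx
  refine ⟨b.unitsSMul w, fun i => ?_, fun i => ?_⟩
  · rcases hw i with h | h <;> simp [Basis.unitsSMul_apply, h]
  · simpa [Basis.unitsSMul_apply, Units.smul_def] using hpos i

lemma quadrant_mem_quadrantCones {b₁ b₂ y u v : E2} (hu : u = b₁ ∨ u = -b₁)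
    (hv : v = b₂ ∨ v = -b₂) : Quadrant y u v ∈ QuadrantCones b₁ b₂ y := by
  rcases hu with rfl | rfl <;> rcases hv with rfl | rfl <;> simp [QuadrantCones]

lemma exists_quadrantCones_disjoint (b : Basis (Fin 2) ℝ E2) (hS : IsCompact S)
    (hfr : IsPreconnected (frontier S)) (hbc : Biconvex (b 0) (b 1) S) (hx : x ∉ S) :
    ∃ y, ∃ C ∈ QuadrantCones (b 0) (b 1) y, x ∈ C ∧ C ∩ S = ∅ := by
  have hpre : IsPreconnected S :=
    hS.isPreconnected_of_convex_lineThru_inter (b.ne_zero 1) (fun p => (hbc p).2) hfr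
  obtain ⟨b', hb', hpos⟩ := b.exists_forall_add_smul_mem_pos
    (fun i => by fin_cases i; exacts [(hbc x).1, (hbc x).2]) hx
  have hline : ∀ z, z = x + b'.repr (z - x) 0 • b' 0 + b'.repr (z - x) 1 • b' 1 := fun z => by
    rw [add_assoc, ← b'.eq_repr_zero_smul_add_repr_one_smul, add_sub_cancel]
  have hneg : ∀ i, -b' i = b i ∨ -b' i = -b i := fun i => by
    rcases hb' i with h | h <;> simp [h]
  rcases exists_quadrant_disjoint_of_isPreconnected b' hS hpre
    (fun z hz h => hpos 1 _ (by rwa [hline z, h, zero_smul, add_zero] at hz))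
    (fun z hz h => hpos 0 _ (by rwa [hline z, h, zero_smul, add_zero] at hz)) with
    ⟨y, hxC, hC⟩ | ⟨y, hxC, hC⟩
  · exact ⟨y, _, quadrant_mem_quadrantCones (hb' 0) (hb' 1), hxC, hC⟩
  · exact ⟨y, _, quadrant_mem_quadrantCones (hneg 0) (hneg 1), hxC, hC⟩

end Quadrants

lemma linearIndependent_bvec (θ : ℝ) : LinearIndependent ℝ ![bvec1 θ, bvec2 θ] := by
  refine LinearIndependent.pair_iff.mpr fun s t hst => ?_
  have h0 := congrArg (· 0) hst
  have h1 := congrArg (· 1) hst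
  simp only [bvec1, bvec2, WithLp.equiv_symm_apply, PiLp.add_apply, PiLp.smul_apply,
    Matrix.cons_val_zero, Matrix.cons_val_one, Matrix.cons_val_fin_one, smul_eq_mul, mul_neg,
    PiLp.zero_apply] at h0 h1
  constructor
  · linear_combination Real.cos θ * h0 + Real.sin θ * h1 - s * Real.sin_sq_add_cos_sq θ
  · linear_combination Real.cos θ * h1 - Real.sin θ * h0 - t * Real.sin_sq_add_cos_sq θ

def thetaBasis (θ : ℝ) : Basis (Fin 2) ℝ E2 :=
  basisOfLinearIndependentOfCardEqFinrank (linearIndependent_bvec θ) (by simp)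

@[simp] lemma thetaBasis_zero (θ : ℝ) : thetaBasis θ 0 = bvec1 θ := by
  simp [thetaBasis]

@[simp] lemma thetaBasis_one (θ : ℝ) : thetaBasis θ 1 = bvec2 θ := by
  simp [thetaBasis]

lemma subset_bhull (θ : ℝ) (A : Set E2) : A ⊆ BHull θ A := by
  rintro a ha _ ⟨y, C, -, hCA, rfl⟩ haC
  exact hCA.subset ⟨haC, ha⟩

lemma bhull_mono (θ : ℝ) {A B : Set E2} (h : A ⊆ B) : BHull θ A ⊆ BHull θ B := by
  refine sInter_subset_sInter ?_
  rintro _ ⟨y, C, hC, hCB, rfl⟩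
  exact ⟨y, C, hC, subset_empty_iff.mp (hCB ▸ inter_subset_inter_right C h), rfl⟩

lemma bhull_eq_self {θ : ℝ} {S : Set E2} (hS : IsCompact S) (hfr : IsPreconnected (frontier S))
    (hbc : ThetaBiconvex θ S) : BHull θ S = S := by
  refine (subset_bhull θ S).antisymm' fun x hxB => by_contra fun hx => ?_
  obtain ⟨y, C, hC, hxC, hCS⟩ := exists_quadrantCones_disjoint (thetaBasis θ) hS hfr
    (by simpa [ThetaBiconvex] using hbc) hx
  simp only [thetaBasis_zero, thetaBasis_one] at hC
  exact hxB Cᶜ ⟨y, C, hC, hCS, rfl⟩ hxC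

lemma Metric.hausdorffDist_le_of_subset_of_subset {α : Type*} [PseudoMetricSpace α]
    {X Y S : Set α} (hXY : X ⊆ Y) (hYS : Y ⊆ S) (hX : X.Nonempty) (hS : Bornology.IsBounded S) :
    hausdorffDist Y S ≤ hausdorffDist S X := by
  refine hausdorffDist_le_of_infDist hausdorffDist_nonneg
    (fun y hy => (infDist_zero_of_mem (hYS hy)).trans_le hausdorffDist_nonneg) fun z hz => ?_
  have hfin : hausdorffEDist S X ≠ ⊤ :=
    hausdorffEDist_ne_top_of_nonempty_of_bounded (hX.mono (hXY.trans hYS)) hX hS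
      (hS.subset (hXY.trans hYS))
  exact (infDist_le_infDist_of_subset hXY hX).trans (infDist_le_hausdorffDist_of_mem hz hfin)

theorem bhull_hausdorff_bound_general (S : Set E2) (hScomp : IsCompact S)
    (hbd : IsPathConnected (frontier S))
    (θ : ℝ) (hbc : ThetaBiconvex θ S)
    (X : Set E2) (hXS : X ⊆ S) (hXne : X.Nonempty) :
    hausdorffDist (BHull θ X) (BHull θ S) ≤
      2 * Real.sqrt 2 * hausdorffDist S X := by
  have hBS : BHull θ S = S := bhull_eq_self hScomp hbd.isConnected.isPreconnected hbc
  rw [hBS]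
  calc hausdorffDist (BHull θ X) S
      ≤ hausdorffDist S X := hausdorffDist_le_of_subset_of_subset (subset_bhull θ X)
        (hBS ▸ bhull_mono θ hXS) hXne hScomp.isBounded
    _ ≤ 2 * Real.sqrt 2 * hausdorffDist S X :=
      le_mul_of_one_le_left hausdorffDist_nonneg (by linarith [Real.one_lt_sqrt_two])

/-- Hausdorff distance bound between the biconvex hull of a
finite sample in `S` and the biconvex hull of `S`. -/
theorem bhull_hausdorff_bound (S : Set E2) (hScomp : IsCompact S)
    (hbd : IsPathConnected (frontier S)) (hreg : S = closure (interior S))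
    (θ : ℝ) (hθ : θ ∈ Ico (0 : ℝ) (π / 2)) (hbc : ThetaBiconvex θ S)
    (X : Set E2) (hXS : X ⊆ S) (hXfin : X.Finite) (hXne : X.Nonempty) :
    hausdorffDist (BHull θ X) (BHull θ S) ≤
      2 * Real.sqrt 2 * hausdorffDist S X :=
  bhull_hausdorff_bound_general S hScomp hbd θ hbc X hXS hXne
end
end

section
/- Let S ⊆ ℝ² be a compact set with path-connected boundary, S = closure(interior(S)). If S is θ₀-biconvex but not θ-biconvex for some θ ≠ θ₀ in [0, π/2), then the Lebesgue measure of 𝔹_θ(S) \ S is strictly positive. -/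
noncomputable section

open Set Metric MeasureTheory Filter Real
open scoped RealInnerProductSpace Topology symmDiff

/-!
A non-convex section of `S` along one of the two axes contains a gap: a segment
`[z - r • e, z + r • e]` whose endpoints lie in `S` and whose interior misses `S`. If
`𝔹_θ(S) \ S` had empty interior, every point just above `z` would lie in an axis-parallel
quadrant missing `S`; such a quadrant cannot reach across the gap to an endpoint, so it contains
a slightly shifted copy of the upper-left or the upper-right quadrant at `z`. Letting the shift
tend to `0`, one of these two open quadrants at `z` misses `S`, and likewise one of the two lower
ones. If the free upper and lower quadrants open to the same side, the gap endpoint on that side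
is not a limit of interior points of `S`. If they open to opposite sides, `S` misses the diagonal
through `z` separating the two endpoints, which both lie on the connected set `∂S`.
-/

section Frame

variable {V : Type*} [NormedAddCommGroup V] [InnerProductSpace ℝ V]

theorem orthonormal_pair_iff {u v : V} :
    Orthonormal ℝ ![u, v] ↔ ‖u‖ = 1 ∧ ‖v‖ = 1 ∧ ⟪u, v⟫ = 0 := by
  rw [orthonormal_iff_ite, Fin.forall_fin_two, Fin.forall_fin_two, Fin.forall_fin_two]
  simp [real_inner_comm u v]
  grind [norm_nonneg]

theorem Orthonormal.pair_swap {u v : V} (h : Orthonormal ℝ ![u, v]) : Orthonormal ℝ ![v, u] := by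
  obtain ⟨hu, hv, huv⟩ := orthonormal_pair_iff.1 h
  exact orthonormal_pair_iff.2 ⟨hv, hu, by rwa [real_inner_comm]⟩

theorem Orthonormal.pair_of_mem {e f u v : V} (h : Orthonormal ℝ ![e, f])
    (hu : u ∈ ({e, -e} : Set V)) (hv : v ∈ ({f, -f} : Set V)) : Orthonormal ℝ ![u, v] := by
  obtain ⟨he, hf, hef⟩ := orthonormal_pair_iff.1 h
  rcases hu with rfl | rfl <;> rcases hv with rfl | rfl <;> simp [he, hf, hef]

end Frame

section Quadrant

variable {u v q w z : E2}

theorem Orthonormal.inner_smul_add_inner_smul (h : Orthonormal ℝ ![u, v]) (x : E2) :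
    ⟪u, x⟫ • u + ⟪v, x⟫ • v = x := by
  let b := (basisOfOrthonormalOfCardEqFinrank h (by simp)).toOrthonormalBasis (by simpa using h)
  simpa [b, Fin.sum_univ_two] using b.sum_repr' x

theorem mem_quadrant_iff_s13 (h : Orthonormal ℝ ![u, v]) :
    w ∈ Quadrant q u v ↔ 0 < ⟪u, w - q⟫ ∧ 0 < ⟪v, w - q⟫ := by
  obtain ⟨hu, hv, huv⟩ := orthonormal_pair_iff.1 h
  constructor
  · rintro ⟨s, t, hs, ht, rfl⟩
    rw [add_assoc, add_sub_cancel_left]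
    simpa [inner_add_right, inner_smul_right, hu, hv, huv, real_inner_comm u v] using ⟨hs, ht⟩
  · rintro ⟨hs, ht⟩
    refine ⟨_, _, hs, ht, ?_⟩
    rw [add_assoc, h.inner_smul_add_inner_smul, add_sub_cancel]

theorem mem_quadrant_add_smul_iff (h : Orthonormal ℝ ![u, v]) {δ : ℝ} :
    w ∈ Quadrant (z + δ • (u + v)) u v ↔ δ < ⟪u, w - z⟫ ∧ δ < ⟪v, w - z⟫ := by
  obtain ⟨hu, hv, huv⟩ := orthonormal_pair_iff.1 h
  rw [mem_quadrant_iff_s13 h]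
  simp only [inner_sub_right, inner_add_right, inner_smul_right, real_inner_self_eq_norm_sq, hu,
    hv, huv, real_inner_comm u v]
  constructor <;> rintro ⟨h₁, h₂⟩ <;> constructor <;> linarith

end Quadrant

section Hull

variable {b₁ b₂ w : E2} {A : Set E2}

def quadrantHull (b₁ b₂ : E2) (A : Set E2) : Set E2 :=
  ⋂₀ {T | ∃ y C, C ∈ QuadrantCones b₁ b₂ y ∧ C ∩ A = ∅ ∧ T = Cᶜ}

theorem quadrantCones_comm (y : E2) : QuadrantCones b₂ b₁ y = QuadrantCones b₁ b₂ y := by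
  have swap : ∀ u v : E2, Quadrant y u v = Quadrant y v u := fun u v ↦ by
    ext x
    constructor <;> rintro ⟨s, t, hs, ht, rfl⟩ <;> exact ⟨t, s, ht, hs, by module⟩
  simp only [QuadrantCones, swap b₂, swap (-b₂)]
  ext C
  simp only [mem_insert_iff, mem_singleton_iff]
  tauto

theorem quadrantCones_neg_right (y : E2) : QuadrantCones b₁ (-b₂) y = QuadrantCones b₁ b₂ y := by
  ext C
  simp only [QuadrantCones, neg_neg, mem_insert_iff, mem_singleton_iff]
  tauto

theorem quadrantHull_comm : quadrantHull b₂ b₁ A = quadrantHull b₁ b₂ A := by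
  simp only [quadrantHull, quadrantCones_comm]

theorem quadrantHull_neg_right : quadrantHull b₁ (-b₂) A = quadrantHull b₁ b₂ A := by
  simp only [quadrantHull, quadrantCones_neg_right]

theorem exists_quadrant_of_notMem_quadrantHull (hw : w ∉ quadrantHull b₁ b₂ A) :
    ∃ q, ∃ u ∈ ({b₁, -b₁} : Set E2), ∃ v ∈ ({b₂, -b₂} : Set E2),
      Disjoint (Quadrant q u v) A ∧ w ∈ Quadrant q u v := by
  simp only [quadrantHull, mem_sInter, mem_ofPred_eq, not_forall] at hw
  obtain ⟨_, ⟨q, C, hC, hCA, rfl⟩, hwC⟩ := hw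
  simp only [QuadrantCones, mem_insert_iff, mem_singleton_iff] at hC
  rw [← disjoint_iff_inter_eq_empty] at hCA
  rw [mem_compl_iff, not_not] at hwC
  rcases hC with rfl | rfl | rfl | rfl
  exacts [⟨q, _, .inl rfl, _, .inl rfl, hCA, hwC⟩, ⟨q, _, .inr rfl, _, .inl rfl, hCA, hwC⟩,
    ⟨q, _, .inl rfl, _, .inr rfl, hCA, hwC⟩, ⟨q, _, .inr rfl, _, .inr rfl, hCA, hwC⟩]

end Hull

theorem IsClosed.exists_Ioo_disjoint {T : Set ℝ} (hT : IsClosed T) {a b c : ℝ} (ha : a ∈ T)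
    (hb : b ∈ T) (hc : c ∈ Icc a b) (hcT : c ∉ T) :
    ∃ a' b', a' < b' ∧ a' ∈ T ∧ b' ∈ T ∧ Disjoint (Ioo a' b') T := by
  obtain ⟨a', ⟨ha'T, ha'⟩, ha'max⟩ :=
    (isCompact_Icc.inter_left hT).exists_isGreatest ⟨a, ha, left_mem_Icc.2 hc.1⟩
  obtain ⟨b', ⟨hb'T, hb'⟩, hb'min⟩ :=
    (isCompact_Icc.inter_left hT).exists_isLeast ⟨b, hb, right_mem_Icc.2 hc.2⟩
  have hac : a' < c := ha'.2.lt_of_ne (ne_of_mem_of_not_mem ha'T hcT)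
  have hcb : c < b' := hb'.1.lt_of_ne' (ne_of_mem_of_not_mem hb'T hcT)
  refine ⟨a', b', hac.trans hcb, ha'T, hb'T, disjoint_left.2 fun t ht htT ↦ ?_⟩
  rcases le_total t c with htc | hct
  · exact ht.1.not_ge (ha'max ⟨htT, ha'.1.trans ht.1.le, htc⟩)
  · exact ht.2.not_ge (hb'min ⟨htT, hct, ht.2.le.trans hb'.2⟩)

theorem exists_gap_of_not_convex {S : Set E2} {p e : E2} (hS : IsClosed S)
    (h : ¬ Convex ℝ (lineThru p e ∩ S)) :
    ∃ (z : E2) (r : ℝ), 0 < r ∧ z - r • e ∈ S ∧ z + r • e ∈ S ∧ ∀ t, |t| < r → z + t • e ∉ S := by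
  obtain ⟨g, hg⟩ : ∃ g : ℝ →ᵃ[ℝ] E2, ∀ t, g t = p + t • e :=
    ⟨AffineMap.lineMap p (p + e), fun t ↦ by simp [AffineMap.lineMap_apply_module', add_comm]⟩
  have hline : lineThru p e ∩ S = g '' (g ⁻¹' S) := by
    ext x
    simp only [lineThru, mem_inter_iff, mem_image, mem_preimage, hg]
    constructor
    · rintro ⟨⟨t, rfl⟩, hx⟩
      exact ⟨t, hx, rfl⟩
    · rintro ⟨t, ht, rfl⟩
      exact ⟨⟨t, rfl⟩, ht⟩
  have hT : ¬ (g ⁻¹' S).OrdConnected := fun hT ↦ h (hline ▸ hT.convex.affine_image g)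
  simp only [ordConnected_def, not_forall, not_subset] at hT
  obtain ⟨a, ha, b, hb, c, hc, hcT⟩ := hT
  obtain ⟨a', b', hab, ha', hb', hgap⟩ :=
    (hS.preimage g.continuous_of_finiteDimensional).exists_Ioo_disjoint ha hb hc hcT
  refine ⟨g ((a' + b') / 2), (b' - a') / 2, by linarith, ?_, ?_, fun t ht htS ↦ ?_⟩
  · rw [mem_preimage, hg] at ha'
    rwa [hg, show p + ((a' + b') / 2) • e - ((b' - a') / 2) • e = p + a' • e by module]
  · rw [mem_preimage, hg] at hb'
    rwa [hg, show p + ((a' + b') / 2) • e + ((b' - a') / 2) • e = p + b' • e by module]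
  have hmem : (a' + b') / 2 + t ∈ Ioo a' b' := by
    obtain ⟨h₁, h₂⟩ := abs_lt.1 ht
    constructor <;> linarith
  exact disjoint_left.1 hgap hmem (by simpa only [mem_preimage, hg, add_smul, add_assoc] using htS)

theorem mem_frontier_of_gap {V : Type*} [NormedAddCommGroup V] [NormedSpace ℝ V] {S : Set V}
    {z e : V} {r : ℝ} (hr : 0 < r) (hy : z + r • e ∈ S) (hgap : ∀ t, |t| < r → z + t • e ∉ S) :
    z + r • e ∈ frontier S := by
  refine ⟨subset_closure hy, fun hint ↦ ?_⟩
  have hlim : Tendsto (fun t : ℝ ↦ z + t • e) (𝓝[<] r) (𝓝 (z + r • e)) :=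
    ((continuous_const.add (continuous_id.smul continuous_const)).tendsto r).mono_left
      nhdsWithin_le_nhds
  obtain ⟨t, htS, ht⟩ := ((hlim.eventually (mem_interior_iff_mem_nhds.1 hint)).and
    (Ioo_mem_nhdsLT (show -r < r by linarith))).exists
  exact hgap t (abs_lt.2 ht) htS

section Configuration

variable {S : Set E2} {e f u v q w z : E2} {r δ : ℝ}

theorem not_disjoint_quadrant_neg_of_mem_closure_interior (h : Orthonormal ℝ ![u, f])
    (hr : 0 < r) (hy : z + r • u ∈ closure (interior S)) (h₁ : Disjoint (Quadrant z u f) S) :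
    ¬ Disjoint (Quadrant z u (-f)) S := by
  intro h₂
  obtain ⟨hu, hf, huf⟩ := orthonormal_pair_iff.1 h
  obtain ⟨p, hpz : 0 < ⟪u, p - z⟫, hp⟩ := mem_closure_iff.1 hy {x | 0 < ⟪u, x - z⟫}
    (isOpen_lt continuous_const (by fun_prop)) (by simp [inner_smul_right, hu, hr])
  obtain ⟨ρ, hρ, hball⟩ := Metric.isOpen_iff.1 isOpen_interior p hp
  rcases lt_or_ge ⟪f, p - z⟫ 0 with hneg | hnonneg
  · refine disjoint_left.1 h₂ ?_ (interior_subset hp)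
    rw [mem_quadrant_iff_s13 (h.pair_of_mem (by simp) (by simp))]
    exact ⟨hpz, by simpa [inner_neg_left] using hneg⟩
  · have hp' : p + (ρ / 2) • f ∈ ball p ρ := by
      simp [norm_smul, hf, abs_of_pos hρ, hρ]
    refine disjoint_left.1 h₁ ?_ (interior_subset (hball hp'))
    rw [mem_quadrant_iff_s13 h, add_sub_right_comm]
    simp only [inner_add_right, inner_smul_right, real_inner_self_eq_norm_sq, hf, huf, mul_zero,
      add_zero, one_pow, mul_one]
    exact ⟨hpz, by linarith⟩

theorem not_disjoint_opposite_quadrant (h : Orthonormal ℝ ![u, f]) {K : Set E2}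
    (hK : IsPreconnected K) (hKS : K ⊆ S) (hz : z ∉ S) (hr : 0 ≤ r) (hx : z - r • u ∈ K)
    (hy : z + r • u ∈ K) (h₁ : Disjoint (Quadrant z u f) S) :
    ¬ Disjoint (Quadrant z (-u) (-f)) S := by
  intro h₂
  obtain ⟨hu, hf, huf⟩ := orthonormal_pair_iff.1 h
  obtain ⟨p, hpK, hp⟩ := hK.intermediate_value hx hy
    (by fun_prop : Continuous fun p ↦ ⟪u - f, p - z⟫).continuousOn
    (show (0 : ℝ) ∈ Icc _ _ by
      simp [inner_sub_left, inner_smul_right, real_inner_comm u f, hu, huf, hr])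
  have hpS := hKS hpK
  simp only [inner_sub_left, sub_eq_zero] at hp
  rcases lt_trichotomy ⟪f, p - z⟫ 0 with hneg | hzero | hpos
  · refine disjoint_left.1 h₂ ?_ hpS
    rw [mem_quadrant_iff_s13 (h.pair_of_mem (by simp) (by simp))]
    simp only [inner_neg_left, Left.neg_pos_iff, hp]
    exact ⟨hneg, hneg⟩
  · have hpz := h.inner_smul_add_inner_smul (p - z)
    simp only [hp, hzero, zero_smul, add_zero] at hpz
    exact hz (sub_eq_zero.1 hpz.symm ▸ hpS)
  · exact disjoint_left.1 h₁ ((mem_quadrant_iff_s13 h).2 ⟨hp ▸ hpos, hpos⟩) hpS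

theorem quadrant_add_smul_subset (h : Orthonormal ℝ ![u, f]) (hv : v ∈ ({f, -f} : Set E2))
    (hfree : Disjoint (Quadrant q u v) S) (hzr : z + r • u ∈ S) (hw : w ∈ Quadrant q u v)
    (hwu : ⟪u, w - z⟫ < δ) (hwf : 0 < ⟪f, w - z⟫) (hwf' : ⟪f, w - z⟫ < δ) (hδr : δ ≤ r) :
    Quadrant (z + δ • (u + f)) u f ⊆ Quadrant q u v := by
  obtain ⟨hu, -, huf⟩ := orthonormal_pair_iff.1 h
  rw [real_inner_comm] at huf
  rcases hv with rfl | rfl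
  · intro p hp
    rw [mem_quadrant_add_smul_iff h] at hp
    rw [mem_quadrant_iff_s13 h] at hw ⊢
    simp only [inner_sub_right] at hp hw hwu hwf' ⊢
    constructor <;> linarith [hp.1, hp.2, hw.1, hw.2]
  · -- a free quadrant opening towards the gap line would contain the endpoint `z + r • u`
    exfalso
    have h' := h.pair_of_mem (mem_insert u _) (by simp : -f ∈ ({f, -f} : Set E2))
    rw [mem_quadrant_iff_s13 h'] at hw
    refine disjoint_left.1 hfree ((mem_quadrant_iff_s13 h').2 ?_) hzr
    simp only [inner_sub_right, inner_add_right, inner_smul_right, inner_neg_left,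
      real_inner_self_eq_norm_sq, hu, huf] at hw hwu hwf ⊢
    constructor <;> linarith [hw.1, hw.2]

theorem exists_disjoint_shifted_quadrant (h : Orthonormal ℝ ![e, f])
    (hint : interior (quadrantHull e f S \ S) = ∅) (hδ : 0 < δ) (hball : ball z δ ⊆ Sᶜ)
    (hδr : δ ≤ r) (hx : z - r • e ∈ S) (hy : z + r • e ∈ S) :
    ∃ u ∈ ({e, -e} : Set E2), Disjoint (Quadrant (z + δ • (u + f)) u f) S := by
  obtain ⟨-, hf, -⟩ := orthonormal_pair_iff.1 h
  set B := ball z δ ∩ {w | 0 < ⟪f, w - z⟫}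
  have hBo : IsOpen B := isOpen_ball.inter (isOpen_lt continuous_const (by fun_prop))
  have hB : z + (δ / 2) • f ∈ B :=
    ⟨by simp [norm_smul, hf, abs_of_pos hδ, hδ], by simp [inner_smul_right, hf, hδ]⟩
  obtain ⟨w, hwB, hw⟩ : ∃ w ∈ B, w ∉ quadrantHull e f S \ S := by
    by_contra! hsub
    have := interior_maximal hsub hBo
    rw [hint] at this
    exact this hB
  obtain ⟨q, u, hu, v, hv, hfree, hwq⟩ :=
    exists_quadrant_of_notMem_quadrantHull fun hw' ↦ hw ⟨hw', hball hwB.1⟩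
  have hu' : Orthonormal ℝ ![u, f] := h.pair_of_mem hu (by simp)
  have hzr : z + r • u ∈ S := by
    rcases hu with rfl | rfl
    exacts [hy, by rwa [smul_neg, ← sub_eq_add_neg]]
  have hcoord : ∀ g : E2, ‖g‖ = 1 → ⟪g, w - z⟫ < δ := fun g hg ↦
    (real_inner_le_norm _ _).trans_lt (by rw [hg, one_mul, ← dist_eq_norm]; exact hwB.1)
  exact ⟨u, hu, hfree.mono_left (quadrant_add_smul_subset hu' hv hfree hzr hwq
    (hcoord u (orthonormal_pair_iff.1 hu').1) hwB.2 (hcoord f hf) hδr)⟩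

theorem exists_disjoint_quadrant_of_interior_eq_empty (h : Orthonormal ℝ ![e, f])
    (hS : IsClosed S) (hint : interior (quadrantHull e f S \ S) = ∅) (hr : 0 < r)
    (hx : z - r • e ∈ S) (hy : z + r • e ∈ S) (hz : z ∉ S) :
    ∃ u ∈ ({e, -e} : Set E2), Disjoint (Quadrant z u f) S := by
  obtain ⟨ε, hε, hball⟩ := Metric.isOpen_iff.1 hS.isOpen_compl z hz
  by_contra! hmeet
  obtain ⟨p₁, hp₁, hp₁S⟩ := not_disjoint_iff.1 (hmeet e (by simp))
  obtain ⟨p₂, hp₂, hp₂S⟩ := not_disjoint_iff.1 (hmeet (-e) (by simp))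
  have h' : Orthonormal ℝ ![-e, f] := h.pair_of_mem (by simp) (by simp)
  rw [mem_quadrant_iff_s13 h] at hp₁
  rw [mem_quadrant_iff_s13 h'] at hp₂
  set m := min (min ε r) (min (min ⟪e, p₁ - z⟫ ⟪f, p₁ - z⟫) (min ⟪-e, p₂ - z⟫ ⟪f, p₂ - z⟫))
  have hm : 0 < m := lt_min (lt_min hε hr) (lt_min (lt_min hp₁.1 hp₁.2) (lt_min hp₂.1 hp₂.2))
  have hm' : m ≤ ε ∧ m ≤ r ∧ m ≤ ⟪e, p₁ - z⟫ ∧ m ≤ ⟪f, p₁ - z⟫ ∧ m ≤ ⟪-e, p₂ - z⟫ ∧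
      m ≤ ⟪f, p₂ - z⟫ := by
    simp [m]
  obtain ⟨u, hu, hfree⟩ := exists_disjoint_shifted_quadrant h hint (half_pos hm)
    ((ball_subset_ball (by linarith)).trans hball) (by linarith) hx hy
  rcases hu with rfl | rfl
  · refine disjoint_left.1 hfree ((mem_quadrant_add_smul_iff h).2 ⟨?_, ?_⟩) hp₁S <;> linarith
  · refine disjoint_left.1 hfree ((mem_quadrant_add_smul_iff h').2 ⟨?_, ?_⟩) hp₂S <;> linarith

theorem nonempty_interior_quadrantHull_diff (h : Orthonormal ℝ ![e, f]) (hS : IsClosed S)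
    (hbd : IsPreconnected (frontier S)) (hreg : S = closure (interior S)) (hr : 0 < r)
    (hx : z - r • e ∈ S) (hy : z + r • e ∈ S) (hgap : ∀ t, |t| < r → z + t • e ∉ S) :
    (interior (quadrantHull e f S \ S)).Nonempty := by
  rw [nonempty_iff_ne_empty]
  intro hint
  have hz : z ∉ S := by simpa using hgap 0 (by simpa)
  have hy' : z + r • e ∈ frontier S := mem_frontier_of_gap hr hy hgap
  have hx' : z - r • e ∈ frontier S := by
    have := mem_frontier_of_gap (e := -e) hr (by rwa [smul_neg, ← sub_eq_add_neg]) fun t ht ↦ by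
      simpa [smul_neg, ← neg_smul] using hgap (-t) (by rwa [abs_neg])
    rwa [smul_neg, ← sub_eq_add_neg] at this
  have hfS := hS.frontier_subset
  obtain ⟨u₁, hu₁, h₁⟩ := exists_disjoint_quadrant_of_interior_eq_empty h hS hint hr hx hy hz
  obtain ⟨u₂, hu₂, h₂⟩ := exists_disjoint_quadrant_of_interior_eq_empty
    (h.pair_of_mem (by simp) (by simp : -f ∈ ({f, -f} : Set E2))) hS
    (by rwa [quadrantHull_neg_right]) hr hx hy hz
  have h' : Orthonormal ℝ ![u₁, f] := h.pair_of_mem hu₁ (by simp)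
  rcases hu₁ with rfl | rfl <;> rcases hu₂ with rfl | rfl
  · exact not_disjoint_quadrant_neg_of_mem_closure_interior h' hr (hreg ▸ hy) h₁ h₂
  · exact not_disjoint_opposite_quadrant h' hbd hfS hz hr.le hx' hy' h₁ h₂
  · exact not_disjoint_opposite_quadrant h' hbd hfS hz hr.le (by rwa [smul_neg, sub_neg_eq_add])
      (by rwa [smul_neg, ← sub_eq_add_neg]) h₁ (by rwa [neg_neg])
  · exact not_disjoint_quadrant_neg_of_mem_closure_interior h' hr
      (by rwa [← hreg, smul_neg, ← sub_eq_add_neg]) h₁ h₂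

end Configuration

theorem orthonormal_bvec (θ : ℝ) : Orthonormal ℝ ![bvec1 θ, bvec2 θ] :=
  orthonormal_pair_iff.2
    ⟨by simp [bvec1, EuclideanSpace.norm_eq], by simp [bvec2, EuclideanSpace.norm_eq],
      by simp [bvec1, bvec2, PiLp.inner_apply, Fin.sum_univ_two]; ring⟩

theorem exists_orthonormal_of_not_thetaBiconvex {θ : ℝ} {S : Set E2}
    (h : ¬ ThetaBiconvex θ S) : ∃ e f p, Orthonormal ℝ ![e, f] ∧
      quadrantHull e f S = BHull θ S ∧ ¬ Convex ℝ (lineThru p e ∩ S) := by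
  simp only [ThetaBiconvex, Biconvex, not_forall, not_and_or] at h
  obtain ⟨p, hp | hp⟩ := h
  · exact ⟨_, _, p, orthonormal_bvec θ, rfl, hp⟩
  · exact ⟨_, _, p, (orthonormal_bvec θ).pair_swap, quadrantHull_comm, hp⟩

theorem bhull_wrong_angle_pos_measure_general (S : Set E2)
    (hbd : IsPathConnected (frontier S)) (hreg : S = closure (interior S))
    (θ : ℝ) (hnbc : ¬ ThetaBiconvex θ S) :
    0 < volume (BHull θ S \ S) := by
  have hS : IsClosed S := hreg ▸ isClosed_closure
  obtain ⟨e, f, p, hef, hhull, hp⟩ := exists_orthonormal_of_not_thetaBiconvex hnbc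
  obtain ⟨z, r, hr, hx, hy, hgap⟩ := exists_gap_of_not_convex hS hp
  rw [← hhull]
  exact Measure.measure_pos_of_nonempty_interior _ <| nonempty_interior_quadrantHull_diff hef hS
    hbd.isConnected.isPreconnected hreg hr hx hy hgap

/-- if `S` is `θ₀`-biconvex but not `θ`-biconvex, then
`𝔹_θ(S) \ S` has positive Lebesgue measure. -/
theorem bhull_wrong_angle_pos_measure (S : Set E2) (hScomp : IsCompact S)
    (hbd : IsPathConnected (frontier S)) (hreg : S = closure (interior S))
    (θ₀ θ : ℝ) (hθ₀ : θ₀ ∈ Ico (0 : ℝ) (π / 2)) (hθ : θ ∈ Ico (0 : ℝ) (π / 2))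
    (hne : θ ≠ θ₀) (hbc : ThetaBiconvex θ₀ S) (hnbc : ¬ ThetaBiconvex θ S) :
    0 < volume (BHull θ S \ S) :=
  bhull_wrong_angle_pos_measure_general S hbd hreg θ hnbc
end
end
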